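/- The number of distinct solutions in K^n of the system x^α = Σ_{β∈I} a_{α,β} x^β (α ∈ J) is at most #I. -/
import Mathlib


open Finset Matrix

/-- Total degree of a multi-index. -/
def mdeg {n : ℕ} (α : Fin n → ℕ) : ℕ := ∑ i, α i

/-- The set `I = {α ∈ ℤ₊ⁿ : |α| ≤ m}` of multi-indices of total degree at most `m`. -/
def Idx (n m : ℕ) : Finset (Fin n → ℕ) :=
  (Fintype.piFinset fun _ => Finset.range (m + 1)).filter fun α => mdeg α ≤ m

/-- `I` is a lower set of multi-indices. -/
def IsLower {n : ℕ} (I : Finset (Fin n → ℕ)) : Prop :=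
  ∀ β ∈ I, ∀ γ : Fin n → ℕ, (∀ i, γ i ≤ β i) → γ ∈ I

/-- `α` belongs to the border `J` of the lower set `I`. -/
def InBorder {n : ℕ} (I : Finset (Fin n → ℕ)) (α : Fin n → ℕ) : Prop :=
  α ∉ I ∧ ∃ β ∈ I, ∃ i : Fin n, α = β + Pi.single i 1

/-- The multiplication matrix `A_i`: its row indexed by `β ∈ I` is the standard basis
vector at `β + e_i` if `β + e_i ∈ I`, and is `(a_{β+e_i,γ})_{γ∈I}` otherwise. -/
def multMat {K : Type*} [Field K] {n : ℕ} (I : Finset (Fin n → ℕ))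
    (a : (Fin n → ℕ) → (Fin n → ℕ) → K) (i : Fin n) : Matrix ↥I ↥I K :=
  fun β γ =>
    if (β : Fin n → ℕ) + Pi.single i 1 ∈ I then
      (if (γ : Fin n → ℕ) = (β : Fin n → ℕ) + Pi.single i 1 then 1 else 0)
    else a ((β : Fin n → ℕ) + Pi.single i 1) γ

/-- The monomial vector `v(x) = (x^β)_{β ∈ I}`. -/
def monVec {K : Type*} [Field K] {n : ℕ} (I : Finset (Fin n → ℕ)) (x : Fin n → K) :
    ↥I → K :=
  fun β => ∏ i, x i ^ (β : Fin n → ℕ) i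

/-- `x` is a solution of the system (1): `x^α = Σ_{β∈I} a_{α,β} x^β` for all `|α| = m+1`. -/
def IsSol {K : Type*} [Field K] {n : ℕ} (m : ℕ)
    (a : (Fin n → ℕ) → (Fin n → ℕ) → K) (x : Fin n → K) : Prop :=
  ∀ α : Fin n → ℕ, mdeg α = m + 1 →
    ∏ i, x i ^ α i = ∑ β ∈ Idx n m, a α β * ∏ i, x i ^ β i

/-- `x` is a solution of the system for a general lower set `I` with border `J`. -/
def IsSolB {K : Type*} [Field K] {n : ℕ} (I : Finset (Fin n → ℕ))
    (a : (Fin n → ℕ) → (Fin n → ℕ) → K) (x : Fin n → K) : Prop :=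
  ∀ α : Fin n → ℕ, InBorder I α →
    ∏ i, x i ^ α i = ∑ β ∈ I, a α β * ∏ i, x i ^ β i

/-- A square matrix is diagonalizable (semisimple). -/
def Diagonalizable {K : Type*} [Field K] {ι : Type*} [Fintype ι] [DecidableEq ι]
    (A : Matrix ι ι K) : Prop :=
  ∃ P : Matrix ι ι K, IsUnit P.det ∧ (P⁻¹ * A * P).IsDiag

/-- The polynomial `P_α = x^α − Σ_{β∈I} a_{α,β} x^β`. -/
noncomputable def Pb {K : Type*} [Field K] {n : ℕ} (I : Finset (Fin n → ℕ))
    (a : (Fin n → ℕ) → (Fin n → ℕ) → K) (α : Fin n → ℕ) : MvPolynomial (Fin n) K :=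
  MvPolynomial.monomial (Finsupp.equivFunOnFinite.symm α) 1 -
    ∑ β ∈ I, MvPolynomial.C (a α β) * MvPolynomial.monomial (Finsupp.equivFunOnFinite.symm β) 1

/-- The ideal generated by the polynomials `P_α`, `α ∈ J`. -/
noncomputable def PIdeal {K : Type*} [Field K] {n : ℕ} (I : Finset (Fin n → ℕ))
    (a : (Fin n → ℕ) → (Fin n → ℕ) → K) : Ideal (MvPolynomial (Fin n) K) :=
  Ideal.span {p | ∃ α : Fin n → ℕ, InBorder I α ∧ p = Pb I a α}

lemma mem_Idx_aux {n m : ℕ} {β : Fin n → ℕ} : β ∈ Idx n m ↔ mdeg β ≤ m := by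
  constructor
  · intro h; exact (Finset.mem_filter.mp h).2
  · intro h
    refine Finset.mem_filter.mpr ⟨Fintype.mem_piFinset.mpr fun i => ?_, h⟩
    rw [Finset.mem_range]
    have : β i ≤ mdeg β := Finset.single_le_sum (fun j _ => Nat.zero_le (β j)) (Finset.mem_univ i)
    omega

lemma mdeg_add_single {n : ℕ} (β : Fin n → ℕ) (i : Fin n) :
    mdeg (β + Pi.single i 1 : Fin n → ℕ) = mdeg β + 1 := by
  unfold mdeg
  simp [Pi.add_apply, Finset.sum_add_distrib, Finset.sum_pi_single']

lemma prod_pow_add_single {K : Type*} [Field K] {n : ℕ} (x : Fin n → K)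
    (β : Fin n → ℕ) (i : Fin n) :
    ∏ j, x j ^ (β + Pi.single i 1 : Fin n → ℕ) j = x i * ∏ j, x j ^ β j := by
  have h1 : ∏ j, x j ^ (Pi.single i 1 : Fin n → ℕ) j = x i := by
    rw [Finset.prod_eq_single i]
    · simp
    · intro j _ hj; simp [Pi.single_eq_of_ne hj]
    · intro h; exact absurd (Finset.mem_univ i) h
  calc ∏ j, x j ^ (β + Pi.single i 1 : Fin n → ℕ) j
      = ∏ j, x j ^ β j * x j ^ (Pi.single i 1 : Fin n → ℕ) j := by
        apply Finset.prod_congr rfl; intro j _; rw [Pi.add_apply, pow_add]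
    _ = (∏ j, x j ^ β j) * ∏ j, x j ^ (Pi.single i 1 : Fin n → ℕ) j :=
        Finset.prod_mul_distrib
    _ = x i * ∏ j, x j ^ β j := by rw [h1, mul_comm]

lemma stepA {K : Type*} [Field K] {n m : ℕ} (a : (Fin n → ℕ) → (Fin n → ℕ) → K)
    (s : Finset (Fin n → K)) (hs : ∀ x ∈ s, IsSol m a x)
    (c : (Fin n → K) → K)
    (hc : ∀ β ∈ Idx n m, ∑ x ∈ s, c x * ∏ j, x j ^ β j = 0) (i : Fin n) :
    ∀ β ∈ Idx n m, ∑ x ∈ s, (c x * x i) * ∏ j, x j ^ β j = 0 := by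
  intro β hβ
  have hβm : mdeg β ≤ m := mem_Idx_aux.mp hβ
  have key : ∀ x : Fin n → K, c x * x i * ∏ j, x j ^ β j
      = c x * ∏ j, x j ^ (β + Pi.single i 1 : Fin n → ℕ) j := by
    intro x; rw [prod_pow_add_single]; ring
  simp_rw [key]
  by_cases h : mdeg (β + Pi.single i 1 : Fin n → ℕ) ≤ m
  · exact hc _ (mem_Idx_aux.mpr h)
  · have hdeg : mdeg (β + Pi.single i 1 : Fin n → ℕ) = m + 1 := by
      rw [mdeg_add_single] at h ⊢; omega
    have : ∀ x ∈ s, c x * ∏ j, x j ^ (β + Pi.single i 1 : Fin n → ℕ) j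
        = ∑ γ ∈ Idx n m, a (β + Pi.single i 1) γ * (c x * ∏ j, x j ^ γ j) := by
      intro x hx
      rw [hs x hx _ hdeg, Finset.mul_sum]
      apply Finset.sum_congr rfl; intro γ _; ring
    rw [Finset.sum_congr rfl this, Finset.sum_comm]
    apply Finset.sum_eq_zero
    intro γ hγ
    rw [← Finset.mul_sum, hc γ hγ, mul_zero]

lemma stepB {K : Type*} [Field K] {n m : ℕ} (a : (Fin n → ℕ) → (Fin n → ℕ) → K)
    (s : Finset (Fin n → K)) (hs : ∀ x ∈ s, IsSol m a x)
    (c : (Fin n → K) → K)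
    (hc : ∀ β ∈ Idx n m, ∑ x ∈ s, c x * ∏ j, x j ^ β j = 0)
    (t : Finset (Fin n → K)) (iy : (Fin n → K) → Fin n) (r : (Fin n → K) → K) :
    ∀ β ∈ Idx n m,
      ∑ x ∈ s, c x * (∏ w ∈ t, (x (iy w) - r w)) * ∏ j, x j ^ β j = 0 := by
  classical
  induction t using Finset.induction with
  | empty => simpa using hc
  | @insert w t hw ih =>
    intro β hβ
    have key : ∀ x : Fin n → K,
        c x * (∏ u ∈ insert w t, (x (iy u) - r u)) * ∏ j, x j ^ β j
        = (c x * ∏ u ∈ t, (x (iy u) - r u)) * x (iy w) * ∏ j, x j ^ β j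
          - r w * ((c x * ∏ u ∈ t, (x (iy u) - r u)) * ∏ j, x j ^ β j) := by
      intro x
      rw [Finset.prod_insert hw]; ring
    simp_rw [key]
    rw [Finset.sum_sub_distrib, ← Finset.mul_sum]
    have h1 := stepA a s hs (fun x => c x * ∏ u ∈ t, (x (iy u) - r u)) ih (iy w) β hβ
    rw [h1, ih β hβ, mul_zero, sub_zero]

lemma card_bound {K : Type*} [Field K] {n m : ℕ} (a : (Fin n → ℕ) → (Fin n → ℕ) → K)
    (s : Finset (Fin n → K)) (hs : ∀ x ∈ s, IsSol m a x) :
    s.card ≤ (Idx n m).card := by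
  classical
  have h0 : (0 : Fin n → ℕ) ∈ Idx n m := mem_Idx_aux.mpr (by simp [mdeg])
  have hli : LinearIndependent K
      (fun x : ↥s => (fun β : ↥(Idx n m) =>
        ∏ j, (x : Fin n → K) j ^ (β : Fin n → ℕ) j)) := by
    rw [Fintype.linearIndependent_iff]
    intro g hg x0
    set c : (Fin n → K) → K := fun x => if h : x ∈ s then g ⟨x, h⟩ else 0 with hcdef
    have hc : ∀ β ∈ Idx n m, ∑ x ∈ s, c x * ∏ j, x j ^ β j = 0 := by
      intro β hβ
      have h1 := congrFun hg ⟨β, hβ⟩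
      simp only [Finset.sum_apply, Pi.smul_apply, smul_eq_mul, Pi.zero_apply] at h1
      rw [← Finset.sum_attach s (fun x => c x * ∏ j, x j ^ β j)]
      rw [← h1]
      apply Finset.sum_congr rfl
      intro x _
      simp [hcdef, x.2]
    have hcx0 : c ↑x0 = g x0 := by simp [hcdef, x0.2]
    by_cases he : s.erase ↑x0 = ∅
    · have hss : s = {(↑x0 : Fin n → K)} := by
        rcases (Finset.erase_eq_empty_iff s ↑x0).mp he with h | h
        · exact absurd x0.2 (by simp [h])
        · exact h
      have := hc 0 h0
      rw [hss, Finset.sum_singleton] at this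
      simp only [Pi.zero_apply, pow_zero, Finset.prod_const_one, mul_one] at this
      rw [← hcx0]; exact this
    · obtain ⟨w0, hw0⟩ := Finset.nonempty_of_ne_empty he
      have hne0 : (↑x0 : Fin n → K) ≠ w0 := (Finset.ne_of_mem_erase hw0).symm
      obtain ⟨i0, _⟩ := Function.ne_iff.mp hne0
      haveI : Inhabited (Fin n) := ⟨i0⟩
      set iy : (Fin n → K) → Fin n :=
        fun w => if h : ∃ i, (↑x0 : Fin n → K) i ≠ w i then h.choose else default with hiydef
      have hiy : ∀ w ∈ s.erase ↑x0, (↑x0 : Fin n → K) (iy w) ≠ w (iy w) := by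
        intro w hw
        have hne : (↑x0 : Fin n → K) ≠ w := (Finset.ne_of_mem_erase hw).symm
        have h : ∃ i, (↑x0 : Fin n → K) i ≠ w i := Function.ne_iff.mp hne
        rw [hiydef]
        simp only [dif_pos h]
        exact h.choose_spec
      have hB := stepB a s hs c hc (s.erase ↑x0) iy (fun w => w (iy w)) 0 h0
      simp only [Pi.zero_apply, pow_zero, Finset.prod_const_one, mul_one] at hB
      rw [Finset.sum_eq_single_of_mem (↑x0 : Fin n → K) x0.2 ?side] at hB
      case side =>
        intro x hx hne
        have hxe : x ∈ s.erase ↑x0 := Finset.mem_erase.mpr ⟨hne, hx⟩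
        rw [Finset.prod_eq_zero hxe (by ring), mul_zero]
      have hqne : ∏ w ∈ s.erase ↑x0, ((↑x0 : Fin n → K) (iy w) - w (iy w)) ≠ 0 :=
        Finset.prod_ne_zero_iff.mpr fun w hw => sub_ne_zero.mpr (hiy w hw)
      have := (mul_eq_zero.mp hB).resolve_right hqne
      rw [← hcx0]; exact this
  have hcard := hli.fintype_card_le_finrank
  calc s.card = Fintype.card ↥s := (Fintype.card_coe s).symm
    _ ≤ Module.finrank K (↥(Idx n m) → K) := hcard
    _ = (Idx n m).card := by rw [Module.finrank_pi, Fintype.card_coe]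

/-- The number of distinct solutions of the system is at most `#I`. -/
theorem stmt_8 {K : Type*} [Field K] {n m : ℕ}
    (a : (Fin n → ℕ) → (Fin n → ℕ) → K) :
    {x : Fin n → K | IsSol m a x}.Finite ∧
    {x : Fin n → K | IsSol m a x}.ncard ≤ (Idx n m).card := by
  classical
  set S := {x : Fin n → K | IsSol m a x} with hS
  have hb : ∀ t : Finset (Fin n → K), ↑t ⊆ S → t.card ≤ (Idx n m).card :=
    fun t ht => card_bound a t fun x hx => ht hx
  have hfin : S.Finite := by
    by_contra h
    obtain ⟨t, hts, htc⟩ := Set.Infinite.exists_subset_card_eq h ((Idx n m).card + 1)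
    have := hb t hts
    omega
  refine ⟨hfin, ?_⟩
  rw [Set.ncard_eq_toFinset_card S hfin]
  exact hb hfin.toFinset (by simp)
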